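/- Let $g:\mathbb{R}^n\to\mathbb{R}$ be an affine function, $h:X\to\mathbb{R}$ convex on a convex set $X$, and define $Q(x,u)=g(x)-g(u)+h(x)-h(u)$. Let $\bar x\in X$, $\lambda\in(0,1]$, $\gamma\in(0,\lambda]$, and $\tilde x\in X$; set $\bar x^+=(1-\lambda)\bar x+\lambda\tilde x$ and for any $u\in X$ set $v=(1-\lambda)\bar x+\lambda u$. Then $Q(\bar x^+,u)-(1-\gamma)Q(\bar x,u)\le Q(\bar x^+,v)-\big(1-\frac{\gamma}{\lambda}\big)Q(\bar x,v)$. -/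
import Mathlib


open scoped RealInnerProductSpace

/-- Reduction inequality for the gap function Q (part of Lemma 4). -/
theorem stmt_6 {n : ℕ} (X : Set (EuclideanSpace ℝ (Fin n))) (hX : Convex ℝ X)
    (a : EuclideanSpace ℝ (Fin n)) (b : ℝ)
    (g : EuclideanSpace ℝ (Fin n) → ℝ) (hg : ∀ x, g x = ⟪a, x⟫ + b)
    (h : EuclideanSpace ℝ (Fin n) → ℝ) (hconv : ConvexOn ℝ X h)
    (Q : EuclideanSpace ℝ (Fin n) → EuclideanSpace ℝ (Fin n) → ℝ)
    (hQ : ∀ x u, Q x u = g x - g u + h x - h u)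
    (xbar : EuclideanSpace ℝ (Fin n)) (hxbar : xbar ∈ X)
    (lam γ : ℝ) (hlam0 : 0 < lam) (hlam1 : lam ≤ 1) (hγ0 : 0 < γ) (hγlam : γ ≤ lam)
    (xtil : EuclideanSpace ℝ (Fin n)) (hxtil : xtil ∈ X)
    (xbarp : EuclideanSpace ℝ (Fin n)) (hxbarp : xbarp = (1 - lam) • xbar + lam • xtil)
    (u : EuclideanSpace ℝ (Fin n)) (hu : u ∈ X)
    (v : EuclideanSpace ℝ (Fin n)) (hv : v = (1 - lam) • xbar + lam • u) :
    Q xbarp u - (1 - γ) * Q xbar u ≤ Q xbarp v - (1 - γ / lam) * Q xbar v := by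
  have hH : h v ≤ (1 - lam) * h xbar + lam * h u := by
    rw [hv]
    exact hconv.2 hxbar hu (by linarith) (le_of_lt hlam0) (by ring)
  have hG : g v = (1 - lam) * g xbar + lam * g u := by
    rw [hv, hg, hg, hg, inner_add_right, inner_smul_right, inner_smul_right]
    ring
  have ht : γ / lam * lam = γ := div_mul_cancel₀ γ (ne_of_gt hlam0)
  have htpos : 0 < γ / lam := div_pos hγ0 hlam0
  have key : γ / lam * (g v + h v) ≤ γ / lam * ((1 - lam) * (g xbar + h xbar) + lam * (g u + h u)) := by
    apply mul_le_mul_of_nonneg_left _ (le_of_lt htpos)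
    linarith
  have hγ : γ = γ / lam * lam := ht.symm
  rw [hQ, hQ, hQ, hQ]
  set s := γ / lam with hs
  rw [hγ]
  nlinarith [key]
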